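/- In the boundary region graph T̂, if boundary strategies μ of Min and χ of Max are mutual best responses from a configuration q (i.e., A_Min(q,μ,χ) = sup_{χ'} A_Min(q,μ,χ') over all boundary strategies χ' of Max, and A_Max(q,μ,χ) = inf_{μ'} A_Max(q,μ',χ) over all boundary strategies μ' of Min), then any type-preserving boundary strategies μ|q and χ|q that agree with μ and χ respectively on all finite runs starting from q are mutual best responses from every configuration q' in the same region as q. -/

import Mathlib

noncomputable section

attribute [local instance] Classical.propDecidable

/-- A two-player (Min/Max) game arena with real-valued step costs. -/
structure Arena (Conf Move : Type) where
  Tr : Conf → Move → Conf → Prop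
  cost : Conf → Move → ℝ
  IsMin : Conf → Prop

namespace Arena

variable {Conf Move : Type}

/-- A finite run in the arena. -/
structure FinRun (G : Arena Conf Move) where
  n : ℕ
  q : Fin (n + 1) → Conf
  m : Fin n → Move
  valid : ∀ i : Fin n, G.Tr (q i.castSucc) (m i) (q i.succ)

/-- The last configuration of a finite run. -/
def FinRun.last {G : Arena Conf Move} (r : G.FinRun) : Conf := r.q (Fin.last r.n)

/-- The first configuration of a finite run. -/
def FinRun.first {G : Arena Conf Move} (r : G.FinRun) : Conf := r.q 0

/-- The trivial run consisting of a single configuration. -/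
def single (G : Arena Conf Move) (q0 : Conf) : G.FinRun :=
  ⟨0, fun _ => q0, Fin.elim0, fun i => i.elim0⟩

/-- Extending a finite run by one transition. -/
def FinRun.extend {G : Arena Conf Move} (r : G.FinRun) (mv : Move) (q' : Conf)
    (h : G.Tr r.last mv q') : G.FinRun where
  n := r.n + 1
  q := Fin.snoc r.q q'
  m := Fin.snoc r.m mv
  valid := by
    intro i
    induction i using Fin.lastCases with
    | last =>
        rw [Fin.succ_last, Fin.snoc_castSucc, Fin.snoc_last]
        exact (Fin.snoc_last (α := fun _ => Conf) (p := r.q) q').symm ▸ h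
    | cast j =>
        rw [Fin.snoc_castSucc, Fin.succ_castSucc, Fin.snoc_castSucc, Fin.snoc_castSucc]
        exact r.valid j

/-- Strategies of player Min: mappings from finite runs to moves that are
available whenever the last configuration belongs to Min. -/
def MinStrategy (G : Arena Conf Move) : Type :=
  {σ : G.FinRun → Move // ∀ r : G.FinRun, G.IsMin r.last → ∃ q', G.Tr r.last (σ r) q'}

/-- Strategies of player Max. -/
def MaxStrategy (G : Arena Conf Move) : Type :=
  {σ : G.FinRun → Move // ∀ r : G.FinRun, ¬ G.IsMin r.last → ∃ q', G.Tr r.last (σ r) q'}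

/-- A strategy is positional if its choice depends only on the last configuration. -/
def Positional {G : Arena Conf Move} (σ : G.FinRun → Move) : Prop :=
  ∀ r r' : G.FinRun, r.last = r'.last → σ r = σ r'

/-- The finite prefixes of the unique play from `q0` in which Min uses `μ`
and Max uses `χ`. -/
def play (G : Arena Conf Move) (μ : G.MinStrategy) (χ : G.MaxStrategy) (q0 : Conf) :
    ℕ → G.FinRun
  | 0 => G.single q0
  | n + 1 =>
    let r := G.play μ χ q0 n
    if h : G.IsMin r.last then
      r.extend (μ.1 r) (Classical.choose (μ.2 r h)) (Classical.choose_spec (μ.2 r h))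
    else
      r.extend (χ.1 r) (Classical.choose (χ.2 r h)) (Classical.choose_spec (χ.2 r h))

/-- Total cost (e.g. total time) of a finite run. -/
def FinRun.time {G : Arena Conf Move} (r : G.FinRun) : ℝ :=
  ∑ i : Fin r.n, G.cost (r.q i.castSucc) (r.m i)

/-- Payoff of player Min (to be minimised): limsup of average cost. -/
def AMin (G : Arena Conf Move) (q0 : Conf) (μ : G.MinStrategy) (χ : G.MaxStrategy) : ℝ :=
  Filter.limsup (fun n : ℕ => (G.play μ χ q0 n).time / n) Filter.atTop

/-- Payoff of player Max (to be maximised): liminf of average cost. -/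
def AMax (G : Arena Conf Move) (q0 : Conf) (μ : G.MinStrategy) (χ : G.MaxStrategy) : ℝ :=
  Filter.liminf (fun n : ℕ => (G.play μ χ q0 n).time / n) Filter.atTop

/-- Upper value of the game at `q0`. -/
def upperVal (G : Arena Conf Move) (q0 : Conf) : ℝ :=
  ⨅ μ : G.MinStrategy, ⨆ χ : G.MaxStrategy, G.AMin q0 μ χ

/-- Lower value of the game at `q0`. -/
def lowerVal (G : Arena Conf Move) (q0 : Conf) : ℝ :=
  ⨆ χ : G.MaxStrategy, ⨅ μ : G.MinStrategy, G.AMax q0 μ χ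

/-- The value of the game at `q0` (meaningful when the game is determined). -/
def val (G : Arena Conf Move) (q0 : Conf) : ℝ := G.upperVal q0

end Arena
/-- `k`-bounded clock valuations. -/
def IsVal (k : ℕ) {C : Type} (ν : C → ℝ) : Prop := ∀ c, 0 ≤ ν c ∧ ν c ≤ (k : ℝ)

/-- Two clock valuations satisfy exactly the same simple clock constraints
`c ⋈ i` and `c − c' ⋈ i` with `i ∈ {0,…,k}` and `⋈ ∈ {<,=,>}` (hence also ≤, ≥). -/
def RegEq (k : ℕ) {C : Type} (ν ν' : C → ℝ) : Prop :=
  ∀ i : ℕ, i ≤ k → ∀ c c' : C,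
    ((ν c < (i : ℝ) ↔ ν' c < (i : ℝ)) ∧ (ν c = (i : ℝ) ↔ ν' c = (i : ℝ)) ∧
      ((i : ℝ) < ν c ↔ (i : ℝ) < ν' c)) ∧
    ((ν c - ν c' < (i : ℝ) ↔ ν' c - ν' c' < (i : ℝ)) ∧
      (ν c - ν c' = (i : ℝ) ↔ ν' c - ν' c' = (i : ℝ)) ∧
      ((i : ℝ) < ν c - ν c' ↔ (i : ℝ) < ν' c - ν' c'))

/-- An average-time game on a (bounded) timed automaton: a timed automaton
together with a partition of locations between players Min and Max. -/
structure TimedGame where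
  L : Type
  C : Type
  A : Type
  finL : Finite L
  finC : Finite C
  finA : Finite A
  k : ℕ
  S : Set (L × (C → ℝ))
  En : A → Set (L × (C → ℝ))
  δ : L → A → L
  ϱ : A → Set C
  LMin : Set L
  bounded : ∀ s ∈ S, IsVal k s.2
  S_zone : (∀ (ℓ : L) (ν ν' : C → ℝ), RegEq k ν ν' → ((ℓ, ν) ∈ S ↔ (ℓ, ν') ∈ S)) ∧
    ∀ ℓ : L, Convex ℝ {ν : C → ℝ | (ℓ, ν) ∈ S}
  En_sub : ∀ a, En a ⊆ S
  En_zone : ∀ a : A,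
    (∀ (ℓ : L) (ν ν' : C → ℝ), RegEq k ν ν' → ((ℓ, ν) ∈ En a ↔ (ℓ, ν') ∈ En a)) ∧
    ∀ ℓ : L, Convex ℝ {ν : C → ℝ | (ℓ, ν) ∈ En a}
  nonstuck : ∀ s ∈ S, ∃ (t : ℝ) (a : A), 0 ≤ t ∧
    (∀ t', 0 ≤ t' → t' ≤ t → (s.1, fun c => s.2 c + t') ∈ S) ∧
    ((s.1, fun c => s.2 c + t) ∈ En a) ∧
    ((δ s.1 a, fun c => if c ∈ ϱ a then 0 else s.2 c + t) ∈ S)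

namespace TimedGame

/-- Configurations of the timed automaton. -/
abbrev Q (T : TimedGame) : Type := T.L × (T.C → ℝ)

/-- Resetting the clocks in `X` to zero. -/
def resetv (T : TimedGame) (ν : T.C → ℝ) (X : Set T.C) : T.C → ℝ :=
  fun c => if c ∈ X then 0 else ν c

/-- The successor configuration after the timed action `τ = (t, a)`. -/
def tsucc (T : TimedGame) (s : T.Q) (τ : ℝ × T.A) : T.Q :=
  (T.δ s.1 τ.2, T.resetv (fun c => s.2 c + τ.1) (T.ϱ τ.2))

/-- The transition relation `s →_τ s'` of the timed automaton. -/
def Trans (T : TimedGame) (s : T.Q) (τ : ℝ × T.A) (s' : T.Q) : Prop :=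
  0 ≤ τ.1 ∧ (∀ t', 0 ≤ t' → t' ≤ τ.1 → (s.1, fun c => s.2 c + t') ∈ T.S) ∧
  ((s.1, fun c => s.2 c + τ.1) ∈ T.En τ.2) ∧ s' = T.tsucc s τ ∧ s' ∈ T.S

/-- The game arena of the average-time game played on the timed automaton. -/
def taArena (T : TimedGame) : Arena {s : T.Q // s ∈ T.S} (ℝ × T.A) where
  Tr := fun s τ s' => T.Trans s.1 τ s'.1
  cost := fun _ τ => τ.1
  IsMin := fun s => s.1.1 ∈ T.LMin

/-- A clock region: an equivalence class of the region equivalence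
(restricted to `k`-bounded valuations). -/
def IsClockRegion (T : TimedGame) (P : Set (T.C → ℝ)) : Prop :=
  ∃ ν : T.C → ℝ, P = {ν' | IsVal T.k ν' ∧ RegEq T.k ν ν'}

/-- Regions: pairs of a location and a clock region. -/
def Region (T : TimedGame) : Type :=
  T.L × {P : Set (T.C → ℝ) // T.IsClockRegion P}

/-- The clock region of a valuation. -/
def clockRegionOf (T : TimedGame) (ν : T.C → ℝ) : {P : Set (T.C → ℝ) // T.IsClockRegion P} :=
  ⟨{ν' | IsVal T.k ν' ∧ RegEq T.k ν ν'}, ⟨ν, rfl⟩⟩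

/-- The region `[s]` of a configuration `s`. -/
def regionOf (T : TimedGame) (s : T.Q) : T.Region := (s.1, T.clockRegionOf s.2)

/-- The configurations `Ω` of the region graphs: pairs of a configuration
of the timed automaton and a region. -/
abbrev Omega (T : TimedGame) : Type := T.Q × T.Region

/-- `(s, (ℓ, P))` is a state of the closed region graph: the locations match
and `s`'s valuation lies in the closure of the clock region `P`. -/
def barS (T : TimedGame) (q : T.Omega) : Prop :=
  q.1.1 = q.2.1 ∧ q.1.2 ∈ closure q.2.2.1

/-- `(s, (ℓ, P))` is a state of the region graph: the locations match and
`s`'s valuation lies in the clock region `P`. -/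
def tildeS (T : TimedGame) (q : T.Omega) : Prop :=
  q.1.1 = q.2.1 ∧ q.1.2 ∈ q.2.2.1

/-- `R →_* R'` : the region `R'` is a time successor of `R`. -/
def timeSucc (T : TimedGame) (R R' : T.Region) : Prop :=
  R.1 = R'.1 ∧ ∀ ν ∈ R.2.1, ∃ t : ℝ, 0 ≤ t ∧
    (∀ t', 0 ≤ t' → t' ≤ t → (R.1, fun c => ν c + t') ∈ T.S) ∧
    (fun c => ν c + t) ∈ R'.2.1

/-- The discrete transition `s →^a s'` of the timed automaton. -/
def astep (T : TimedGame) (s : T.Q) (a : T.A) (s' : T.Q) : Prop :=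
  s ∈ T.S ∧ s' ∈ T.S ∧ s ∈ T.En a ∧ s' = (T.δ s.1 a, T.resetv s.2 (T.ϱ a))

/-- `R →^a R'` at the level of regions. -/
def regAct (T : TimedGame) (R : T.Region) (a : T.A) (R' : T.Region) : Prop :=
  ∃ ν ∈ R.2.1, ∃ ν' ∈ R'.2.1, T.astep (R.1, ν) a (R'.1, ν')

/-- Moves of the region graphs: a delay, an intermediate region, and an action. -/
abbrev RMove (T : TimedGame) : Type := ℝ × T.Region × T.A

/-- Transitions underlying pre-runs: `(s', R') = succ((s,R), (t,R'',a))` with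
`R →_* R'' →^a R'`. -/
def preTrans (T : TimedGame) (q : T.Omega) (m : T.RMove) (q' : T.Omega) : Prop :=
  0 ≤ m.1 ∧ T.timeSucc q.2 m.2.1 ∧ T.regAct m.2.1 m.2.2 q'.2 ∧
  q'.1 = T.tsucc q.1 (m.1, m.2.2)

/-- Labelled transitions of the closed region graph `T̄`. -/
def cTrans (T : TimedGame) (q : T.Omega) (m : T.RMove) (q' : T.Omega) : Prop :=
  T.preTrans q m q' ∧ T.barS q ∧ T.barS q' ∧
  (fun c => q.1.2 c + m.1) ∈ closure m.2.1.2.1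

/-- Labelled transitions of the boundary region graph `T̂`: additionally the
intermediate valuation lies on the boundary of the intermediate region. -/
def bTrans (T : TimedGame) (q : T.Omega) (m : T.RMove) (q' : T.Omega) : Prop :=
  T.cTrans q m q' ∧ (fun c => q.1.2 c + m.1) ∈ frontier m.2.1.2.1

/-- Labelled transitions of the region graph `T̃`. -/
def rTrans (T : TimedGame) (q : T.Omega) (m : T.RMove) (q' : T.Omega) : Prop :=
  T.preTrans q m q' ∧ T.tildeS q ∧ T.tildeS q' ∧
  (fun c => q.1.2 c + m.1) ∈ m.2.1.2.1

/-- The arena of pre-runs over `Ω`. -/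
def preArena (T : TimedGame) : Arena T.Omega T.RMove where
  Tr := T.preTrans
  cost := fun _ m => m.1
  IsMin := fun q => q.2.1 ∈ T.LMin

/-- Finite pre-runs. -/
abbrev PreRunF (T : TimedGame) : Type := (T.preArena).FinRun

/-- Pre-strategies of Min. -/
abbrev MinPre (T : TimedGame) : Type := (T.preArena).MinStrategy

/-- Pre-strategies of Max. -/
abbrev MaxPre (T : TimedGame) : Type := (T.preArena).MaxStrategy

/-- A pre-strategy of Min is a strategy in the closed region graph `T̄`
if it always waits into the closure of the chosen intermediate region. -/
def MinClosed (T : TimedGame) (μ : T.MinPre) : Prop :=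
  ∀ r : T.PreRunF,
    (fun c => (Arena.FinRun.last r).1.2 c + (μ.1 r).1) ∈ closure (μ.1 r).2.1.2.1

def MaxClosed (T : TimedGame) (χ : T.MaxPre) : Prop :=
  ∀ r : T.PreRunF,
    (fun c => (Arena.FinRun.last r).1.2 c + (χ.1 r).1) ∈ closure (χ.1 r).2.1.2.1

/-- Admissible strategies: strategies in the region graph `T̃`. -/
def MinAdmissible (T : TimedGame) (μ : T.MinPre) : Prop :=
  ∀ r : T.PreRunF,
    (fun c => (Arena.FinRun.last r).1.2 c + (μ.1 r).1) ∈ (μ.1 r).2.1.2.1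

def MaxAdmissible (T : TimedGame) (χ : T.MaxPre) : Prop :=
  ∀ r : T.PreRunF,
    (fun c => (Arena.FinRun.last r).1.2 c + (χ.1 r).1) ∈ (χ.1 r).2.1.2.1

/-- Boundary strategies of Min: the delay is the **infimum** of the delays
reaching the closure of the chosen intermediate region. -/
def MinBoundary (T : TimedGame) (μ : T.MinPre) : Prop :=
  ∀ r : T.PreRunF,
    (μ.1 r).1 = sInf {t : ℝ | 0 ≤ t ∧
      (fun c => (Arena.FinRun.last r).1.2 c + t) ∈ closure (μ.1 r).2.1.2.1}

/-- Boundary strategies of Max: the delay is the **supremum** of the delays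
reaching the closure of the chosen intermediate region. -/
def MaxBoundary (T : TimedGame) (χ : T.MaxPre) : Prop :=
  ∀ r : T.PreRunF,
    (χ.1 r).1 = sSup {t : ℝ | 0 ≤ t ∧
      (fun c => (Arena.FinRun.last r).1.2 c + t) ∈ closure (χ.1 r).2.1.2.1}

/-- The sequence of regions visited by a finite pre-run (its type, part 1). -/
def typeConfs (T : TimedGame) (r : T.PreRunF) : ℕ → Option T.Region :=
  fun i => if h : i < r.n + 1 then some ((r.q ⟨i, h⟩).2) else none

/-- The sequence of intermediate regions and actions of a finite pre-run
(its type, part 2). -/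
def typeMoves (T : TimedGame) (r : T.PreRunF) : ℕ → Option (T.Region × T.A) :=
  fun i => if h : i < r.n then some ((r.m ⟨i, h⟩).2) else none

/-- Two finite pre-runs have the same type. -/
def sameType (T : TimedGame) (r r' : T.PreRunF) : Prop :=
  T.typeConfs r = T.typeConfs r' ∧ T.typeMoves r = T.typeMoves r'

/-- The waiting time `t(s, α)` of the boundary timed action `α = (b, c, a)`. -/
def tOf (T : TimedGame) (s : T.Q) (α : ℕ × T.C × T.A) : ℝ :=
  if s.2 α.2.1 ≤ (α.1 : ℝ) then (α.1 : ℝ) - s.2 α.2.1 else 0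

/-- Type-preserving boundary strategies of Min: runs of the same type are
assigned the same intermediate region, action and boundary timed action. -/
def MinTP (T : TimedGame) (μ : T.MinPre) : Prop :=
  T.MinBoundary μ ∧
  ∀ r r' : T.PreRunF, T.sameType r r' →
    (μ.1 r).2 = (μ.1 r').2 ∧
    ∃ (b : ℕ) (c : T.C), b ≤ T.k ∧
      (μ.1 r).1 = T.tOf (Arena.FinRun.last r).1 (b, c, (μ.1 r).2.2) ∧
      (μ.1 r').1 = T.tOf (Arena.FinRun.last r').1 (b, c, (μ.1 r').2.2)

def MaxTP (T : TimedGame) (χ : T.MaxPre) : Prop :=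
  T.MaxBoundary χ ∧
  ∀ r r' : T.PreRunF, T.sameType r r' →
    (χ.1 r).2 = (χ.1 r').2 ∧
    ∃ (b : ℕ) (c : T.C), b ≤ T.k ∧
      (χ.1 r).1 = T.tOf (Arena.FinRun.last r).1 (b, c, (χ.1 r).2.2) ∧
      (χ.1 r').1 = T.tOf (Arena.FinRun.last r').1 (b, c, (χ.1 r').2.2)

/-- `μ_ε` is `ε`-close to the type-preserving boundary strategy `μ` of Min. -/
def EpsCloseMin (T : TimedGame) (μ με : T.MinPre) (ε : ℝ) : Prop :=
  ∀ r : T.PreRunF, (με.1 r).2 = (μ.1 r).2 ∧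
    (fun c => (Arena.FinRun.last r).1.2 c + (με.1 r).1) ∈ (μ.1 r).2.1.2.1 ∧
    (με.1 r).1 ≤ (μ.1 r).1 + ε

/-- `χ_ε` is `ε`-close to the type-preserving boundary strategy `χ` of Max. -/
def EpsCloseMax (T : TimedGame) (χ χε : T.MaxPre) (ε : ℝ) : Prop :=
  ∀ r : T.PreRunF, (χε.1 r).2 = (χ.1 r).2 ∧
    (fun c => (Arena.FinRun.last r).1.2 c + (χε.1 r).1) ∈ (χ.1 r).2.1.2.1 ∧
    (χ.1 r).1 - ε ≤ (χε.1 r).1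

/-- Upper value of the game on the subgraph of region graphs whose strategies
are the pre-strategies satisfying `PMin`, `PMax` respectively. -/
def upperG (T : TimedGame) (PMin : T.MinPre → Prop) (PMax : T.MaxPre → Prop)
    (q : T.Omega) : ℝ :=
  ⨅ μ : {μ : T.MinPre // PMin μ}, ⨆ χ : {χ : T.MaxPre // PMax χ},
    Arena.AMin T.preArena q μ.1 χ.1

/-- Lower value. -/
def lowerG (T : TimedGame) (PMin : T.MinPre → Prop) (PMax : T.MaxPre → Prop)
    (q : T.Omega) : ℝ :=
  ⨆ χ : {χ : T.MaxPre // PMax χ}, ⨅ μ : {μ : T.MinPre // PMin μ},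
    Arena.AMax T.preArena q μ.1 χ.1

def upperBar (T : TimedGame) : T.Omega → ℝ := T.upperG T.MinClosed T.MaxClosed
def lowerBar (T : TimedGame) : T.Omega → ℝ := T.lowerG T.MinClosed T.MaxClosed
/-- The value of the average-time game on the closed region graph `T̄`. -/
def valBar (T : TimedGame) : T.Omega → ℝ := T.upperBar

def upperHat (T : TimedGame) : T.Omega → ℝ := T.upperG T.MinBoundary T.MaxBoundary
def lowerHat (T : TimedGame) : T.Omega → ℝ := T.lowerG T.MinBoundary T.MaxBoundary
/-- The value of the average-time game on the boundary region graph `T̂`. -/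
def valHat (T : TimedGame) : T.Omega → ℝ := T.upperHat

def upperTilde (T : TimedGame) : T.Omega → ℝ := T.upperG T.MinAdmissible T.MaxAdmissible
def lowerTilde (T : TimedGame) : T.Omega → ℝ := T.lowerG T.MinAdmissible T.MaxAdmissible
/-- The value of the average-time game on the region graph `T̃`. -/
def valTilde (T : TimedGame) : T.Omega → ℝ := T.upperTilde

/-- A function is simple on a set `X` of configurations. -/
def SimpleOn (T : TimedGame) (X : Set T.Omega) (F : T.Omega → ℝ) : Prop :=
  (∃ e : ℤ, ∀ q ∈ X, F q = (e : ℝ)) ∨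
  (∃ (e : ℤ) (c : T.C), ∀ q ∈ X, F q = (e : ℝ) - q.1.2 c)

/-- A function on the configurations of the closed region graph is regionally
simple. -/
def RegionallySimple (T : TimedGame) (F : T.Omega → ℝ) : Prop :=
  ∀ R : T.Region, T.SimpleOn {q : T.Omega | T.barS q ∧ q.2 = R} F

/-- A function on the configurations of the closed region graph is regionally
constant. -/
def RegionallyConstant (T : TimedGame) (F : T.Omega → ℝ) : Prop :=
  ∀ R : T.Region, ∃ v : ℝ, ∀ q : T.Omega, T.barS q → q.2 = R → F q = v

/-- The configuration `(s, [s])` of the region graphs determined by a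
configuration `s` of the timed automaton. -/
def confOf (T : TimedGame) (s : T.Q) : T.Omega := (s, T.regionOf s)

/-- A region is thin if some clock has an integer value throughout its closure. -/
def Thin (T : TimedGame) (R : T.Region) : Prop :=
  ∃ c : T.C, ∀ ν ∈ closure R.2.1, ∃ m : ℤ, ν c = (m : ℝ)

/-- `R'` is the immediate time successor of `R`. -/
def ImmTimeSucc (T : TimedGame) (R R' : T.Region) : Prop :=
  R.1 = R'.1 ∧ ∀ ν ∈ R.2.1, ∃ ε : ℝ, 0 < ε ∧
    ∀ t : ℝ, 0 < t → t < ε → (fun c => ν c + t) ∈ R'.2.1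

end TimedGame

/-!
Along two plays from configurations `q₁`, `q₂` of the same region in which the players make the
same choices of intermediate regions and actions and use boundary delays, the types stay equal and
the total times differ by at most `k`. Write `T` for the total time, so that `ν c - T` is minus the
date of the last reset of the clock `c`. From `ν`, the closure of the intermediate region is
reached exactly after the delays `t ≥ 0` with `⌊p c⌋ ≤ ν c + t ≤ ⌈p c⌉` for all `c`, `p` being any
point of the region. So the shortest boundary delay moves the time to
`max T (max_c (⌊p c⌋ - (ν c - T)))` and the longest to `min_c (⌈p c⌉ - (ν c - T))`; both are
1-Lipschitz in `T` and the reset dates, and a reset sets a date to the current time. Hence the two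
plays have the same limit average times.

From `q'`, the type-preserving strategies `μq`, `χq` make the choices that `μ`, `χ` make from `q`,
so they achieve the same payoffs. A boundary deviation of Max from `q'` is mirrored from `q` by the
boundary strategy copying its choices along the play from `q'`, again with the same payoffs, so it
gains nothing against `μq` because the mirror gains nothing against `μ`; symmetrically for Min.
-/

section Comparisons

def WeakSide (i x y : ℝ) : Prop := (i ≤ x → i ≤ y) ∧ (x ≤ i → y ≤ i)

variable {x y i : ℝ}

theorem sameSide_iff_cmp_eq :
    ((x < i ↔ y < i) ∧ (x = i ↔ y = i) ∧ (i < x ↔ i < y)) ↔ cmp x i = cmp y i := by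
  rcases lt_trichotomy x i with h | h | h <;> rcases lt_trichotomy y i with h' | h' | h' <;>
    simp only [(cmp_eq_lt_iff _ _).2, (cmp_eq_eq_iff _ _).2, (cmp_eq_gt_iff _ _).2, h, h'] <;>
    grind

theorem WeakSide.of_cmp_eq (h : cmp x i = cmp y i) : WeakSide i x y := by
  simp only [WeakSide, ← not_lt, ← cmp_eq_lt_iff x, ← cmp_eq_lt_iff y, ← cmp_eq_gt_iff x,
    ← cmp_eq_gt_iff y, h]
  exact ⟨id, id⟩

theorem cmp_add_mul_sub_eq {t : ℝ} (h : WeakSide i x y) (ht₀ : 0 < t) (ht₁ : t ≤ 1) :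
    cmp (y + t * (x - y)) i = cmp x i := by
  rcases lt_trichotomy x i with hx | rfl | hx
  · have := h.2 hx.le
    rw [(cmp_eq_lt_iff _ _).2 hx, cmp_eq_lt_iff]
    nlinarith
  · rw [le_antisymm (h.2 le_rfl) (h.1 le_rfl)]
    simp
  · have := h.1 hx.le
    rw [(cmp_eq_gt_iff _ _).2 hx, cmp_eq_gt_iff]
    nlinarith

theorem isClosed_setOf_weakSide {X : Type*} [TopologicalSpace X] {f : X → ℝ} (hf : Continuous f)
    (i x : ℝ) : IsClosed {y | WeakSide i x (f y)} :=
  (isClosed_imp isOpen_const (isClosed_le continuous_const hf)).inter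
    (isClosed_imp isOpen_const (isClosed_le hf continuous_const))

end Comparisons

section ClockValuations

/-- Membership in the closure of the clock region of `ν`: the non-strict versions of the clock
constraints satisfied by `ν`. -/
def WeakRegEq (k : ℕ) {C : Type} (ν ν' : C → ℝ) : Prop :=
  (∀ i : ℕ, i ≤ k → ∀ c, WeakSide i (ν c) (ν' c)) ∧
    ∀ i : ℕ, i ≤ k → ∀ c c', WeakSide i (ν c - ν c') (ν' c - ν' c')

variable {k : ℕ} {C : Type} {ν ν' ν'' : C → ℝ}

theorem regEq_iff_cmp : RegEq k ν ν' ↔ ∀ i : ℕ, i ≤ k → ∀ c c',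
    cmp (ν c) i = cmp (ν' c) i ∧ cmp (ν c - ν c') i = cmp (ν' c - ν' c') i := by
  simp only [RegEq, sameSide_iff_cmp_eq]

theorem RegEq.symm (h : RegEq k ν ν') : RegEq k ν' ν := by
  rw [regEq_iff_cmp] at h ⊢
  exact fun i hi c c' => ⟨(h i hi c c').1.symm, (h i hi c c').2.symm⟩

theorem RegEq.trans (h : RegEq k ν ν') (h' : RegEq k ν' ν'') : RegEq k ν ν'' := by
  rw [regEq_iff_cmp] at h h' ⊢
  exact fun i hi c c' =>
    ⟨(h i hi c c').1.trans (h' i hi c c').1, (h i hi c c').2.trans (h' i hi c c').2⟩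

theorem RegEq.weakRegEq (h : RegEq k ν ν') : WeakRegEq k ν ν' := by
  rw [regEq_iff_cmp] at h
  exact ⟨fun i hi c => .of_cmp_eq (h i hi c c).1, fun i hi c c' => .of_cmp_eq (h i hi c c').2⟩

theorem WeakRegEq.isVal (hν : IsVal k ν) (h : WeakRegEq k ν ν') : IsVal k ν' := fun c =>
  ⟨by exact_mod_cast (h.1 0 k.zero_le c).1 (by exact_mod_cast (hν c).1),
    (h.1 k le_rfl c).2 (hν c).2⟩

theorem WeakRegEq.regEq_add_mul_sub {t : ℝ} (h : WeakRegEq k ν ν') (ht₀ : 0 < t) (ht₁ : t ≤ 1) :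
    RegEq k ν (fun c => ν' c + t * (ν c - ν' c)) := by
  rw [regEq_iff_cmp]
  intro i hi c c'
  refine ⟨(cmp_add_mul_sub_eq (h.1 i hi c) ht₀ ht₁).symm, ?_⟩
  rw [← cmp_add_mul_sub_eq (h.2 i hi c c') ht₀ ht₁]
  ring_nf

theorem isClosed_setOf_weakRegEq (ν : C → ℝ) : IsClosed {ν' | WeakRegEq k ν ν'} := by
  simp only [WeakRegEq, Set.ofPred_and, Set.ofPred_forall]
  exact (isClosed_iInter fun i => isClosed_iInter fun _ => isClosed_iInter fun c =>
    isClosed_setOf_weakSide (by fun_prop) _ _).inter (isClosed_iInter fun i =>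
      isClosed_iInter fun _ => isClosed_iInter fun c => isClosed_iInter fun c' =>
        isClosed_setOf_weakSide (by fun_prop) _ _)

theorem IsVal.forall_weakSide_iff {p z : C → ℝ} (hp : IsVal k p) :
    (∀ i : ℕ, i ≤ k → ∀ c, WeakSide i (p c) (z c)) ↔
      ∀ c, (⌊p c⌋₊ : ℝ) ≤ z c ∧ z c ≤ ⌈p c⌉₊ := by
  refine ⟨fun h c => ⟨(h _ (Nat.floor_le_of_le (hp c).2) c).1 (Nat.floor_le (hp c).1),
    (h _ (Nat.ceil_le.2 (hp c).2) c).2 (Nat.le_ceil _)⟩,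
    fun h i _ c => ⟨fun hi => ?_, fun hi => ?_⟩⟩
  · exact le_trans (by exact_mod_cast Nat.le_floor hi) (h c).1
  · exact (h c).2.trans (by exact_mod_cast Nat.ceil_le.2 hi)

def delaySet (y : C → ℝ) (P : Set (C → ℝ)) : Set ℝ :=
  {t | 0 ≤ t ∧ (fun c => y c + t) ∈ closure P}

end ClockValuations

section Suprema

open Set

variable {ι : Type*} [Finite ι] [Nonempty ι] {B : ℝ}

theorem abs_ciSup_sub_ciSup_le {f g : ι → ℝ} (h : ∀ i, |f i - g i| ≤ B) :
    |(⨆ i, f i) - ⨆ i, g i| ≤ B := by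
  have key : ∀ f g : ι → ℝ, (∀ i, |f i - g i| ≤ B) → (⨆ i, f i) ≤ (⨆ i, g i) + B :=
    fun f g h => ciSup_le fun i => by
      linarith [(abs_le.1 (h i)).2, le_ciSup (finite_range g).bddAbove i]
  rw [abs_sub_le_iff]
  constructor
  · linarith [key f g h]
  · linarith [key g f fun i => abs_sub_comm (f i) (g i) ▸ h i]

theorem abs_ciInf_sub_ciInf_le {f g : ι → ℝ} (h : ∀ i, |f i - g i| ≤ B) :
    |(⨅ i, f i) - ⨅ i, g i| ≤ B := by
  have key : ∀ f g : ι → ℝ, (∀ i, |f i - g i| ≤ B) → (⨅ i, g i) - B ≤ ⨅ i, f i :=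
    fun f g h => le_ciInf fun i => by
      linarith [(abs_le.1 (h i)).1, ciInf_le (finite_range g).bddBelow i]
  rw [abs_sub_le_iff]
  constructor
  · linarith [key g f fun i => abs_sub_comm (f i) (g i) ▸ h i]
  · linarith [key f g h]

variable {L y₁ y₂ : ι → ℝ} {T₁ T₂ : ℝ}

theorem abs_add_max_ciSup_sub_le (hT : |T₁ - T₂| ≤ B)
    (hy : ∀ i, |(y₁ i - T₁) - (y₂ i - T₂)| ≤ B) :
    |(T₁ + max 0 (⨆ i, L i - y₁ i)) - (T₂ + max 0 (⨆ i, L i - y₂ i))| ≤ B := by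
  rw [← max_add_add_left, ← max_add_add_left, add_zero, add_zero,
    add_ciSup (finite_range _).bddAbove, add_ciSup (finite_range _).bddAbove]
  refine (abs_max_sub_max_le_max _ _ _ _).trans (max_le hT (abs_ciSup_sub_ciSup_le fun i => ?_))
  rw [show T₁ + (L i - y₁ i) - (T₂ + (L i - y₂ i)) = -((y₁ i - T₁) - (y₂ i - T₂)) by ring,
    abs_neg]
  exact hy i

theorem abs_add_ciInf_sub_le (hy : ∀ i, |(y₁ i - T₁) - (y₂ i - T₂)| ≤ B) :
    |(T₁ + ⨅ i, L i - y₁ i) - (T₂ + ⨅ i, L i - y₂ i)| ≤ B := by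
  rw [add_ciInf (finite_range _).bddBelow, add_ciInf (finite_range _).bddBelow]
  refine abs_ciInf_sub_ciInf_le fun i => ?_
  rw [show T₁ + (L i - y₁ i) - (T₂ + (L i - y₂ i)) = -((y₁ i - T₁) - (y₂ i - T₂)) by ring,
    abs_neg]
  exact hy i

end Suprema

section Averages

open Filter Topology

theorem limsup_le_and_liminf_le_of_tendsto_sub {u v : ℕ → ℝ} {a b : ℝ}
    (hv : ∀ n, v n ∈ Set.Icc a b) (h : Tendsto (fun n => u n - v n) atTop (𝓝 0)) :
    limsup u atTop ≤ limsup v atTop ∧ liminf u atTop ≤ liminf v atTop := by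
  have hle : IsBoundedUnder (· ≤ ·) atTop v := isBoundedUnder_of ⟨b, fun n => (hv n).2⟩
  have hge : IsBoundedUnder (· ≥ ·) atTop v := isBoundedUnder_of ⟨a, fun n => (hv n).1⟩
  have hu : u = (fun n => u n - v n) + v := by ext; simp
  rw [hu]
  constructor
  · calc limsup ((fun n => u n - v n) + v) atTop
        ≤ limsup (fun n => u n - v n) atTop + limsup v atTop :=
          limsup_add_le h.isBoundedUnder_ge h.isBoundedUnder_le hge.isCoboundedUnder_le hle
      _ = limsup v atTop := by rw [h.limsup_eq, zero_add]
  · calc liminf ((fun n => u n - v n) + v) atTop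
        ≤ limsup (fun n => u n - v n) atTop + liminf v atTop :=
          liminf_add_le h.isBoundedUnder_ge h.isBoundedUnder_le hge hle.isCoboundedUnder_ge
      _ = liminf v atTop := by rw [h.limsup_eq, zero_add]

theorem limsup_eq_and_liminf_eq_of_tendsto_sub {u v : ℕ → ℝ} {a b : ℝ}
    (hu : ∀ n, u n ∈ Set.Icc a b) (hv : ∀ n, v n ∈ Set.Icc a b)
    (h : Tendsto (fun n => u n - v n) atTop (𝓝 0)) :
    limsup u atTop = limsup v atTop ∧ liminf u atTop = liminf v atTop := by
  have h' : Tendsto (fun n => v n - u n) atTop (𝓝 0) := by simpa using h.neg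
  obtain ⟨h₁, h₂⟩ := limsup_le_and_liminf_le_of_tendsto_sub hv h
  obtain ⟨h₁', h₂'⟩ := limsup_le_and_liminf_le_of_tendsto_sub hu h'
  exact ⟨h₁.antisymm h₁', h₂.antisymm h₂'⟩

theorem limsup_div_eq_and_liminf_div_eq {f g : ℕ → ℝ} {K B : ℝ}
    (hf : ∀ n, 0 ≤ f n ∧ f n ≤ K * n) (hg : ∀ n, 0 ≤ g n ∧ g n ≤ K * n)
    (hfg : ∀ n, |f n - g n| ≤ B) :
    limsup (fun n => f n / n) atTop = limsup (fun n => g n / n) atTop ∧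
      liminf (fun n => f n / n) atTop = liminf (fun n => g n / n) atTop := by
  have hK : 0 ≤ K := by simpa using (hf 1).1.trans (hf 1).2
  have hbound : ∀ h : ℕ → ℝ, (∀ n, 0 ≤ h n ∧ h n ≤ K * n) → ∀ n, h n / n ∈ Set.Icc 0 K :=
    fun h hh n => ⟨div_nonneg (hh n).1 n.cast_nonneg, div_le_of_le_mul₀ n.cast_nonneg hK (hh n).2⟩
  refine limsup_eq_and_liminf_eq_of_tendsto_sub (hbound f hf) (hbound g hg)
    (squeeze_zero_norm (fun n => ?_) (tendsto_const_div_atTop_nhds_zero_nat B))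
  rw [← sub_div, Real.norm_eq_abs, abs_div, Nat.abs_cast]
  exact div_le_div_of_nonneg_right (hfg n) n.cast_nonneg

end Averages

namespace Arena

variable {Conf Move : Type} {G : Arena Conf Move}

@[simp]
theorem FinRun.last_extend (r : G.FinRun) (m : Move) (q' : Conf) (h : G.Tr r.last m q') :
    (r.extend m q' h).last = q' :=
  Fin.snoc_last (α := fun _ => Conf) _ _

@[simp]
theorem FinRun.extend_q_zero (r : G.FinRun) (m : Move) (q' : Conf) (h : G.Tr r.last m q') :
    (r.extend m q' h).q 0 = r.q 0 := by
  change Fin.snoc (α := fun _ => Conf) r.q q' (Fin.castSucc 0) = r.q 0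
  exact Fin.snoc_castSucc (α := fun _ => Conf) _ _ _

theorem FinRun.time_extend (r : G.FinRun) (m : Move) (q' : Conf) (h : G.Tr r.last m q') :
    (r.extend m q' h).time = r.time + G.cost r.last m := by
  change ∑ i : Fin (r.n + 1), G.cost (Fin.snoc (α := fun _ => Conf) r.q q' i.castSucc)
    (Fin.snoc (α := fun _ => Move) r.m m i) = _
  simp only [Fin.sum_univ_castSucc, Fin.snoc_castSucc, Fin.snoc_last, FinRun.time, FinRun.last]

theorem time_single (q₀ : Conf) : (G.single q₀).time = 0 :=
  Fin.sum_univ_zero _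

def nextMove (G : Arena Conf Move) (μ : G.MinStrategy) (χ : G.MaxStrategy) (q₀ : Conf) (n : ℕ) :
    Move :=
  if G.IsMin (G.play μ χ q₀ n).last then μ.1 (G.play μ χ q₀ n) else χ.1 (G.play μ χ q₀ n)

section Play

variable (μ : G.MinStrategy) (χ : G.MaxStrategy) (q₀ : Conf)

theorem play_succ (n : ℕ) :
    ∃ (q' : Conf) (h : G.Tr (G.play μ χ q₀ n).last (G.nextMove μ χ q₀ n) q'),
      G.play μ χ q₀ (n + 1) = (G.play μ χ q₀ n).extend (G.nextMove μ χ q₀ n) q' h := by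
  by_cases hmin : G.IsMin (G.play μ χ q₀ n).last
  · rw [nextMove, if_pos hmin]
    exact ⟨_, Classical.choose_spec (μ.2 _ hmin), by rw [play, dif_pos hmin]⟩
  · rw [nextMove, if_neg hmin]
    exact ⟨_, Classical.choose_spec (χ.2 _ hmin), by rw [play, dif_neg hmin]⟩

theorem play_n (n : ℕ) : (G.play μ χ q₀ n).n = n := by
  induction n with
  | zero => rfl
  | succ n ih =>
    obtain ⟨_, _, e⟩ := play_succ μ χ q₀ n
    rw [e]
    exact congrArg (· + 1) ih

theorem play_q_zero (n : ℕ) : (G.play μ χ q₀ n).q 0 = q₀ := by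
  induction n with
  | zero => rfl
  | succ n ih =>
    obtain ⟨_, _, e⟩ := play_succ μ χ q₀ n
    rw [e, FinRun.extend_q_zero, ih]

end Play

def patch (σ f : G.FinRun → Move) (r : G.FinRun) : Move :=
  if ∃ q', G.Tr r.last (f r) q' then f r else σ r

theorem patch_available {σ f : G.FinRun → Move} {r : G.FinRun} (h : ∃ q', G.Tr r.last (σ r) q') :
    ∃ q', G.Tr r.last (patch σ f r) q' := by
  unfold patch
  split_ifs with hf
  exacts [hf, h]

theorem patch_of_available {σ f : G.FinRun → Move} {r : G.FinRun}
    (h : ∃ q', G.Tr r.last (f r) q') : patch σ f r = f r :=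
  if_pos h

def MinStrategy.patch (μ : G.MinStrategy) (f : G.FinRun → Move) : G.MinStrategy :=
  ⟨Arena.patch μ.1 f, fun r h => patch_available (μ.2 r h)⟩

def MaxStrategy.patch (χ : G.MaxStrategy) (f : G.FinRun → Move) : G.MaxStrategy :=
  ⟨Arena.patch χ.1 f, fun r h => patch_available (χ.2 r h)⟩

end Arena

namespace TimedGame

instance (T : TimedGame) : Finite T.C := T.finC

variable {T : TimedGame}

section ClockRegions

open Set

variable {R P Q : Set (T.C → ℝ)} {p q y z ν ν' : T.C → ℝ}

theorem IsClockRegion.mem_iff (hP : T.IsClockRegion P) (hp : p ∈ P) :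
    z ∈ P ↔ IsVal T.k z ∧ RegEq T.k p z := by
  obtain ⟨ν, rfl⟩ := hP
  exact ⟨fun hz => ⟨hz.1, hp.2.symm.trans hz.2⟩, fun hz => ⟨hz.1, hp.2.trans hz.2⟩⟩

theorem IsClockRegion.isVal (hP : T.IsClockRegion P) (hz : z ∈ P) : IsVal T.k z :=
  ((hP.mem_iff hz).1 hz).1

theorem IsClockRegion.regEq (hP : T.IsClockRegion P) (hp : p ∈ P) (hz : z ∈ P) :
    RegEq T.k p z :=
  ((hP.mem_iff hp).1 hz).2

theorem IsClockRegion.eq_of_regEq (hP : T.IsClockRegion P) (hQ : T.IsClockRegion Q)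
    (hp : p ∈ P) (hq : q ∈ Q) (h : RegEq T.k p q) : P = Q := by
  ext z
  rw [hP.mem_iff hp, hQ.mem_iff hq]
  exact ⟨fun hz => ⟨hz.1, h.symm.trans hz.2⟩, fun hz => ⟨hz.1, h.trans hz.2⟩⟩

theorem IsClockRegion.mem_closure_iff (hP : T.IsClockRegion P) (hp : p ∈ P) :
    z ∈ closure P ↔ WeakRegEq T.k p z := by
  refine ⟨fun hz => closure_minimal (fun w hw => (hP.regEq hp hw).weakRegEq)
    (isClosed_setOf_weakRegEq p) hz, fun hz => ?_⟩
  have hmem : ∀ n : ℕ, (fun c => z c + 1 / ((n : ℝ) + 1) * (p c - z c)) ∈ P := fun n => by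
    have hreg := hz.regEq_add_mul_sub (t := 1 / ((n : ℝ) + 1)) (by positivity)
      (div_le_one_of_le₀ (by simp) (by positivity))
    exact (hP.mem_iff hp).2 ⟨hreg.weakRegEq.isVal (hP.isVal hp), hreg⟩
  have hlim : Filter.Tendsto (fun n : ℕ => fun c => z c + 1 / ((n : ℝ) + 1) * (p c - z c))
      Filter.atTop (nhds z) := by
    rw [tendsto_pi_nhds]
    intro c
    simpa using (tendsto_one_div_add_atTop_nhds_zero_nat.mul_const (p c - z c)).const_add (z c)
  exact mem_closure_of_tendsto hlim (.of_forall hmem)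

theorem IsClockRegion.isVal_of_mem_closure (hP : T.IsClockRegion P) (hz : z ∈ closure P) :
    IsVal T.k z := by
  obtain ⟨p, hp⟩ := closure_nonempty_iff.1 ⟨z, hz⟩
  exact ((hP.mem_closure_iff hp).1 hz).isVal (hP.isVal hp)

theorem regEq_resetv (X : Set T.C) (hν : IsVal T.k ν) (hν' : IsVal T.k ν')
    (h : RegEq T.k ν ν') : RegEq T.k (T.resetv ν X) (T.resetv ν' X) := by
  rw [regEq_iff_cmp] at h ⊢
  intro i hi c c'
  have hneg : cmp (0 - ν c') i = cmp (0 - ν' c') i := by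
    rcases i.eq_zero_or_pos with rfl | hi₀
    · rw [Nat.cast_zero, cmp_sub_zero, cmp_sub_zero, ← cmp_swap, ← cmp_swap (ν' c'),
        ← Nat.cast_zero, (h 0 T.k.zero_le c' c').1]
    · have : (0 : ℝ) < i := by exact_mod_cast hi₀
      rw [(cmp_eq_lt_iff _ _).2 (by linarith [(hν c').1]),
        (cmp_eq_lt_iff _ _).2 (by linarith [(hν' c').1])]
  by_cases hc : c ∈ X <;> by_cases hc' : c' ∈ X <;>
    simp only [resetv, hc, hc', if_true, if_false, sub_zero, true_and, and_self]
  · exact hneg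
  · exact (h i hi c c').1
  · exact h i hi c c'

theorem regAct_unique {P R₁ R₂ : T.Region} {a : T.A} (h₁ : T.regAct P a R₁)
    (h₂ : T.regAct P a R₂) : R₁ = R₂ := by
  obtain ⟨ν₁, hν₁, w₁, hw₁, -, -, -, e₁⟩ := h₁
  obtain ⟨ν₂, hν₂, w₂, hw₂, -, -, -, e₂⟩ := h₂
  simp only [Prod.ext_iff] at e₁ e₂
  refine Prod.ext (e₁.1.trans e₂.1.symm) (Subtype.ext (R₁.2.2.eq_of_regEq R₂.2.2 hw₁ hw₂ ?_))
  rw [e₁.2, e₂.2]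
  exact regEq_resetv _ (P.2.2.isVal hν₁) (P.2.2.isVal hν₂) (P.2.2.regEq hν₁ hν₂)

theorem continuous_resetv (X : Set T.C) : Continuous fun ν => T.resetv ν X :=
  continuous_pi fun c => continuous_if_const _ (fun _ => continuous_const) fun _ => by fun_prop

theorem resetv_mem_closure {P R : T.Region} {a : T.A} (h : T.regAct P a R)
    (hz : z ∈ closure P.2.1) : T.resetv z (T.ϱ a) ∈ closure R.2.1 := by
  obtain ⟨ν₁, hν₁, w₁, hw₁, -, -, -, e₁⟩ := h
  simp only [Prod.ext_iff] at e₁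
  refine map_mem_closure (f := fun ν => T.resetv ν (T.ϱ a)) (continuous_resetv _) hz
    fun ν hν => (R.2.2.mem_iff hw₁).2 ⟨?_, ?_⟩
  · exact fun c => by
      by_cases hc : c ∈ T.ϱ a <;> simp [resetv, hc, P.2.2.isVal hν c, T.k.cast_nonneg]
  · rw [e₁.2]
    exact regEq_resetv _ (P.2.2.isVal hν₁) (P.2.2.isVal hν) (P.2.2.regEq hν₁ hν)

theorem abs_resetv_sub_le {y₁ y₂ : T.C → ℝ} {t₁ t₂ B : ℝ} (X : Set T.C) (c : T.C)
    (ht : |t₁ - t₂| ≤ B) (hy : |(y₁ c - t₁) - (y₂ c - t₂)| ≤ B) :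
    |(T.resetv y₁ X c - t₁) - (T.resetv y₂ X c - t₂)| ≤ B := by
  by_cases hc : c ∈ X
  · simp only [resetv, hc, if_true]
    rwa [show 0 - t₁ - (0 - t₂) = -(t₁ - t₂) by ring, abs_neg]
  · simpa [resetv, hc] using hy

theorem weakSide_sub_of_mem_closure (hP : T.IsClockRegion P) (hp : p ∈ P)
    (hreach : ∀ ν ∈ R, ∃ t, 0 ≤ t ∧ (fun c => ν c + t) ∈ P) (hy : y ∈ closure R) :
    ∀ i : ℕ, i ≤ T.k → ∀ c c', WeakSide i (p c - p c') (y c - y c') := by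
  have : closure R ⊆ {y | ∀ i : ℕ, i ≤ T.k → ∀ c c', WeakSide i (p c - p c') (y c - y c')} := by
    refine closure_minimal (fun ν hν => ?_) ?_
    · obtain ⟨t, -, ht⟩ := hreach ν hν
      intro i hi c c'
      simpa only [add_sub_add_right_eq_sub] using (hP.regEq hp ht).weakRegEq.2 i hi c c'
    · simp only [Set.ofPred_forall]
      exact isClosed_iInter fun i => isClosed_iInter fun _ => isClosed_iInter fun c =>
        isClosed_iInter fun c' => isClosed_setOf_weakSide (by fun_prop) _ _
  exact this hy

theorem delaySet_eq_Icc [Nonempty T.C] (hP : T.IsClockRegion P) (hp : p ∈ P)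
    (hreach : ∀ ν ∈ R, ∃ t, 0 ≤ t ∧ (fun c => ν c + t) ∈ P) (hy : y ∈ closure R) :
    delaySet y P = Icc (max 0 (⨆ c, (⌊p c⌋₊ : ℝ) - y c)) (⨅ c, (⌈p c⌉₊ : ℝ) - y c) := by
  ext t
  -- delays do not change clock differences, so only the box `⌊p⌋ ≤ y + t ≤ ⌈p⌉` constrains `t`
  simp only [delaySet, mem_ofPred_eq, hP.mem_closure_iff hp, WeakRegEq, add_sub_add_right_eq_sub,
    and_iff_left (weakSide_sub_of_mem_closure hP hp hreach hy), (hP.isVal hp).forall_weakSide_iff,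
    mem_Icc, max_le_iff]
  rw [ciSup_le_iff (finite_range _).bddAbove, le_ciInf_iff (finite_range _).bddBelow]
  simp only [sub_le_iff_le_add', le_sub_iff_add_le', forall_and, and_assoc]

theorem max_ciSup_le_ciInf [Nonempty T.C] (hP : T.IsClockRegion P) (hp : p ∈ P)
    (hreach : ∀ ν ∈ R, ∃ t, 0 ≤ t ∧ (fun c => ν c + t) ∈ P) (hy : y ∈ closure R) :
    max 0 (⨆ c, (⌊p c⌋₊ : ℝ) - y c) ≤ ⨅ c, (⌈p c⌉₊ : ℝ) - y c := by
  have : closure R ⊆ {y | (∀ c c', (⌊p c⌋₊ : ℝ) - y c ≤ ⌈p c'⌉₊ - y c') ∧ ∀ c, y c ≤ ⌈p c⌉₊} := by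
    refine closure_minimal (fun ν hν => ?_) ?_
    · obtain ⟨t, ht₀, ht⟩ := hreach ν hν
      have hbox := (hP.isVal hp).forall_weakSide_iff.1 (hP.regEq hp ht).weakRegEq.1
      exact ⟨fun c c' => by linarith [(hbox c).1, (hbox c').2], fun c => by linarith [(hbox c).2]⟩
    · simp only [Set.ofPred_and, Set.ofPred_forall]
      exact (isClosed_iInter fun c => isClosed_iInter fun c' => isClosed_le (by fun_prop)
        (by fun_prop)).inter (isClosed_iInter fun c => isClosed_le (by fun_prop) (by fun_prop))
  obtain ⟨h₁, h₂⟩ := this hy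
  exact max_le (le_ciInf fun c => by linarith [h₂ c])
    (ciSup_le fun c => le_ciInf fun c' => h₁ c c')

theorem mem_delaySet_and_abs_add_sub_le [Nonempty T.C] {y₁ y₂ : T.C → ℝ} {d₁ d₂ T₁ T₂ B : ℝ}
    (hP : T.IsClockRegion P) (hreach : ∀ ν ∈ R, ∃ t, 0 ≤ t ∧ (fun c => ν c + t) ∈ P)
    (hy₁ : y₁ ∈ closure R) (hy₂ : y₂ ∈ closure R)
    (hd : d₁ = sInf (delaySet y₁ P) ∧ d₂ = sInf (delaySet y₂ P) ∨
      d₁ = sSup (delaySet y₁ P) ∧ d₂ = sSup (delaySet y₂ P))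
    (hT : |T₁ - T₂| ≤ B) (hy : ∀ c, |(y₁ c - T₁) - (y₂ c - T₂)| ≤ B) :
    d₁ ∈ delaySet y₁ P ∧ d₂ ∈ delaySet y₂ P ∧ |(T₁ + d₁) - (T₂ + d₂)| ≤ B := by
  obtain ⟨ν, hν⟩ := closure_nonempty_iff.1 ⟨y₁, hy₁⟩
  obtain ⟨_, -, hp⟩ := hreach ν hν
  have h₁ := max_ciSup_le_ciInf hP hp hreach hy₁
  have h₂ := max_ciSup_le_ciInf hP hp hreach hy₂
  rw [delaySet_eq_Icc hP hp hreach hy₁, delaySet_eq_Icc hP hp hreach hy₂] at hd ⊢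
  rcases hd with ⟨rfl, rfl⟩ | ⟨rfl, rfl⟩
  · rw [csInf_Icc h₁, csInf_Icc h₂]
    exact ⟨left_mem_Icc.2 h₁, left_mem_Icc.2 h₂, abs_add_max_ciSup_sub_le hT hy⟩
  · rw [csSup_Icc h₁, csSup_Icc h₂]
    exact ⟨right_mem_Icc.2 h₁, right_mem_Icc.2 h₂, abs_add_ciInf_sub_le hy⟩

theorem IsClockRegion.le_of_mem_delaySet [Nonempty T.C] {d : ℝ} (hP : T.IsClockRegion P)
    (hy : IsVal T.k y) (hd : d ∈ delaySet y P) : d ≤ T.k := by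
  obtain ⟨c⟩ := ‹Nonempty T.C›
  linarith [(hy c).1, (hP.isVal_of_mem_closure hd.2 c).2]

end ClockRegions

section Runs

variable {r r' : T.PreRunF}

theorem sameType.n_eq (h : T.sameType r r') : r.n = r'.n := by
  have key : ∀ i, i < r.n + 1 ↔ i < r'.n + 1 := fun i => by
    have := congrFun h.1 i
    simp only [typeConfs] at this
    split_ifs at this <;> omega
  have := (key r.n).1 (by omega)
  have := (key r'.n).2 (by omega)
  omega

theorem sameType.last_snd (h : T.sameType r r') : r.last.2 = r'.last.2 := by
  obtain ⟨n, q, m, v⟩ := r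
  obtain ⟨n', q', m', v'⟩ := r'
  obtain rfl : n = n' := h.n_eq
  have := congrFun h.1 n
  simpa [typeConfs, Arena.FinRun.last, Fin.last] using this

theorem typeConfs_extend (m : T.RMove) (s : T.Omega) (htr : T.preArena.Tr r.last m s) :
    T.typeConfs (r.extend m s htr) =
      fun i => if i = r.n + 1 then some s.2 else T.typeConfs r i := by
  funext i
  simp only [typeConfs, Arena.FinRun.extend]
  rcases lt_trichotomy i (r.n + 1) with hi | rfl | hi
  · simp [hi, hi.ne, Nat.lt_succ_of_lt hi, Fin.snoc]
  · simp [Fin.snoc]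
  · simp [hi.ne', hi.not_gt, show ¬i < r.n + 1 + 1 by omega]

theorem typeMoves_extend (m : T.RMove) (s : T.Omega) (htr : T.preArena.Tr r.last m s) :
    T.typeMoves (r.extend m s htr) = fun i => if i = r.n then some m.2 else T.typeMoves r i := by
  funext i
  simp only [typeMoves, Arena.FinRun.extend]
  rcases lt_trichotomy i r.n with hi | rfl | hi
  · simp [hi, hi.ne, Nat.lt_succ_of_lt hi, Fin.snoc]
  · simp [Fin.snoc]
  · simp [hi.ne', hi.not_gt, show ¬i < r.n + 1 by omega]

theorem sameType.extend (h : T.sameType r r') {m m' : T.RMove} {s s' : T.Omega}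
    (htr : T.preArena.Tr r.last m s) (htr' : T.preArena.Tr r'.last m' s') (hm : m.2 = m'.2)
    (hs : s.2 = s'.2) : T.sameType (r.extend m s htr) (r'.extend m' s' htr') := by
  rw [sameType, typeConfs_extend, typeConfs_extend, typeMoves_extend, typeMoves_extend, h.1, h.2,
    h.n_eq, hm, hs]
  exact ⟨rfl, rfl⟩

theorem sameType_single {q q' : T.Omega} (h : q.2 = q'.2) :
    T.sameType (T.preArena.single q) (T.preArena.single q') := by
  refine ⟨funext fun i => ?_, rfl⟩
  simp only [typeConfs, Arena.single, h]
  rfl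

theorem sameType.isMin_iff (h : T.sameType r r') :
    T.preArena.IsMin r.last ↔ T.preArena.IsMin r'.last := by
  change r.last.2.1 ∈ T.LMin ↔ r'.last.2.1 ∈ T.LMin
  rw [h.last_snd]

@[simp]
theorem preArena_cost (q : T.Omega) (m : T.RMove) : T.preArena.cost q m = m.1 :=
  rfl

theorem time_nonneg (r : T.PreRunF) : 0 ≤ r.time :=
  Finset.sum_nonneg fun i _ => (r.valid i).1

theorem barS_of_preTrans {q s : T.Omega} {m : T.RMove} (hq : T.barS q) (htr : T.preTrans q m s)
    (hm : (fun c => q.1.2 c + m.1) ∈ closure m.2.1.2.1) : T.barS s := by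
  obtain ⟨-, hts, hact, hs⟩ := htr
  refine ⟨?_, by rw [hs]; exact resetv_mem_closure hact hm⟩
  obtain ⟨_, _, _, _, -, -, -, e⟩ := hact
  rw [hs, (Prod.ext_iff.1 e).1, ← hts.1, ← hq.1]
  rfl

end Runs

/-- The invariant of two plays of the same type: `ν c - time` is minus the date of the last
reset of `c`, and these dates, like the total times, stay within `k` of each other. -/
structure Coupled (r₁ r₂ : T.PreRunF) : Prop where
  sameType : T.sameType r₁ r₂
  barS_fst : T.barS r₁.last
  barS_snd : T.barS r₂.last
  time_le_fst : r₁.time ≤ T.k * r₁.n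
  time_le_snd : r₂.time ≤ T.k * r₂.n
  abs_time_sub_le : |r₁.time - r₂.time| ≤ T.k
  abs_clock_sub_le : ∀ c, |(r₁.last.1.2 c - r₁.time) - (r₂.last.1.2 c - r₂.time)| ≤ T.k

theorem Coupled.single {q₁ q₂ : T.Omega} (hq₁ : T.barS q₁) (hq₂ : T.barS q₂) (h : q₁.2 = q₂.2) :
    Coupled (T.preArena.single q₁) (T.preArena.single q₂) where
  sameType := sameType_single h
  barS_fst := hq₁
  barS_snd := hq₂
  time_le_fst := by rw [Arena.time_single]; positivity
  time_le_snd := by rw [Arena.time_single]; positivity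
  abs_time_sub_le := by simp [Arena.time_single]
  abs_clock_sub_le c := by
    have h₁ := q₁.2.2.2.isVal_of_mem_closure hq₁.2 c
    have h₂ := q₂.2.2.2.isVal_of_mem_closure hq₂.2 c
    rw [Arena.time_single, Arena.time_single, abs_le]
    change -(T.k : ℝ) ≤ q₁.1.2 c - 0 - (q₂.1.2 c - 0) ∧ q₁.1.2 c - 0 - (q₂.1.2 c - 0) ≤ T.k
    constructor <;> linarith [h₁.1, h₁.2, h₂.1, h₂.2]

theorem Coupled.extend [Nonempty T.C] {r₁ r₂ : T.PreRunF} (h : Coupled r₁ r₂) {m₁ m₂ : T.RMove}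
    {s₁ s₂ : T.Omega} (htr₁ : T.preArena.Tr r₁.last m₁ s₁) (htr₂ : T.preArena.Tr r₂.last m₂ s₂)
    (hm : m₁.2 = m₂.2)
    (hd : m₁.1 = sInf (delaySet r₁.last.1.2 m₁.2.1.2.1) ∧
        m₂.1 = sInf (delaySet r₂.last.1.2 m₂.2.1.2.1) ∨
      m₁.1 = sSup (delaySet r₁.last.1.2 m₁.2.1.2.1) ∧
        m₂.1 = sSup (delaySet r₂.last.1.2 m₂.2.1.2.1)) :
    Coupled (r₁.extend m₁ s₁ htr₁) (r₂.extend m₂ s₂ htr₂) := by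
  obtain ⟨d₁, P, a⟩ := m₁
  obtain ⟨d₂, P', a'⟩ := m₂
  obtain ⟨rfl, rfl⟩ := Prod.mk.inj hm
  have hreach : ∀ ν ∈ r₁.last.2.2.1, ∃ t, 0 ≤ t ∧ (fun c => ν c + t) ∈ P.2.1 :=
    fun ν hν => let ⟨t, ht, _, hP⟩ := htr₁.2.1.2 ν hν; ⟨t, ht, hP⟩
  have hy₂ : r₂.last.1.2 ∈ closure r₁.last.2.2.1 := h.sameType.last_snd ▸ h.barS_snd.2
  obtain ⟨hd₁, hd₂, htime⟩ := mem_delaySet_and_abs_add_sub_le P.2.2 hreach h.barS_fst.2 hy₂ hd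
    h.abs_time_sub_le h.abs_clock_sub_le
  have hs : s₁.2 = s₂.2 := regAct_unique htr₁.2.2.1 htr₂.2.2.1
  have hk₁ := P.2.2.le_of_mem_delaySet (r₁.last.2.2.2.isVal_of_mem_closure h.barS_fst.2) hd₁
  have hk₂ := P.2.2.le_of_mem_delaySet (r₁.last.2.2.2.isVal_of_mem_closure hy₂) hd₂
  refine ⟨h.sameType.extend htr₁ _ hm hs, ?_, ?_, ?_, ?_, ?_, fun c => ?_⟩
  · simpa using barS_of_preTrans h.barS_fst htr₁ hd₁.2
  · simpa using barS_of_preTrans h.barS_snd htr₂ hd₂.2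
  · rw [Arena.FinRun.time_extend, preArena_cost]
    push_cast [Arena.FinRun.extend]
    linarith [h.time_le_fst]
  · rw [Arena.FinRun.time_extend, preArena_cost]
    push_cast [Arena.FinRun.extend]
    linarith [h.time_le_snd]
  · simpa [Arena.FinRun.time_extend] using htime
  · simp only [Arena.FinRun.last_extend, Arena.FinRun.time_extend, preArena_cost, htr₁.2.2.2,
      htr₂.2.2.2]
    exact abs_resetv_sub_le (y₁ := fun c => r₁.last.1.2 c + d₁) (y₂ := fun c => r₂.last.1.2 c + d₂)
      _ c htime (by simpa only [add_sub_add_right_eq_sub] using h.abs_clock_sub_le c)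

theorem coupled_play [Nonempty T.C] {μ₁ μ₂ : T.MinPre} {χ₁ χ₂ : T.MaxPre}
    (hμ₁ : T.MinBoundary μ₁) (hμ₂ : T.MinBoundary μ₂)
    (hχ₁ : T.MaxBoundary χ₁) (hχ₂ : T.MaxBoundary χ₂)
    {q₁ q₂ : T.Omega} (hq₁ : T.barS q₁) (hq₂ : T.barS q₂) (hq : q₁.2 = q₂.2)
    (hMin : ∀ n, T.sameType (T.preArena.play μ₁ χ₁ q₁ n) (T.preArena.play μ₂ χ₂ q₂ n) →
      T.preArena.IsMin (T.preArena.play μ₁ χ₁ q₁ n).last →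
      (μ₁.1 (T.preArena.play μ₁ χ₁ q₁ n)).2 = (μ₂.1 (T.preArena.play μ₂ χ₂ q₂ n)).2)
    (hMax : ∀ n, T.sameType (T.preArena.play μ₁ χ₁ q₁ n) (T.preArena.play μ₂ χ₂ q₂ n) →
      ¬ T.preArena.IsMin (T.preArena.play μ₁ χ₁ q₁ n).last →
      (χ₁.1 (T.preArena.play μ₁ χ₁ q₁ n)).2 = (χ₂.1 (T.preArena.play μ₂ χ₂ q₂ n)).2)
    (n : ℕ) : Coupled (T.preArena.play μ₁ χ₁ q₁ n) (T.preArena.play μ₂ χ₂ q₂ n) := by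
  induction n with
  | zero => exact .single hq₁ hq₂ hq
  | succ n ih =>
    obtain ⟨s₁, htr₁, e₁⟩ := Arena.play_succ μ₁ χ₁ q₁ n
    obtain ⟨s₂, htr₂, e₂⟩ := Arena.play_succ μ₂ χ₂ q₂ n
    rw [e₁, e₂]
    have hturn := ih.sameType.isMin_iff
    by_cases hmin : T.preArena.IsMin (T.preArena.play μ₁ χ₁ q₁ n).last
    · simp only [Arena.nextMove, if_pos hmin, if_pos (hturn.1 hmin)] at htr₁ htr₂ ⊢
      exact ih.extend htr₁ htr₂ (hMin n ih.sameType hmin) (.inl ⟨hμ₁ _, hμ₂ _⟩)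
    · simp only [Arena.nextMove, if_neg hmin, if_neg (hturn.not.1 hmin)] at htr₁ htr₂ ⊢
      exact ih.extend htr₁ htr₂ (hMax n ih.sameType hmin) (.inr ⟨hχ₁ _, hχ₂ _⟩)

theorem AMin_eq_and_AMax_eq_of_coupled {μ₁ μ₂ : T.MinPre} {χ₁ χ₂ : T.MaxPre} {q₁ q₂ : T.Omega}
    (h : ∀ n, Coupled (T.preArena.play μ₁ χ₁ q₁ n) (T.preArena.play μ₂ χ₂ q₂ n)) :
    T.preArena.AMin q₁ μ₁ χ₁ = T.preArena.AMin q₂ μ₂ χ₂ ∧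
      T.preArena.AMax q₁ μ₁ χ₁ = T.preArena.AMax q₂ μ₂ χ₂ :=
  limsup_div_eq_and_liminf_div_eq
    (fun n => ⟨time_nonneg _, by simpa only [Arena.play_n] using (h n).time_le_fst⟩)
    (fun n => ⟨time_nonneg _, by simpa only [Arena.play_n] using (h n).time_le_snd⟩)
    (fun n => (h n).abs_time_sub_le)

/-- The move copying the intermediate region and action that `σ` chooses after `ρ n`, `n` being
the length of the run, with the delay selected by `D` (`sInf` or `sSup`). It need not be available
off the copied play, hence the mirror strategies are built with `Arena.patch`. -/
def copyMove (D : Set ℝ → ℝ) (σ : T.PreRunF → T.RMove) (ρ : ℕ → T.PreRunF) (r : T.PreRunF) :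
    T.RMove :=
  (D (delaySet r.last.1.2 (σ (ρ r.n)).2.1.2.1), (σ (ρ r.n)).2)

theorem exists_preTrans_of_sameType {r r' : T.PreRunF} (h : T.sameType r r') {m : T.RMove}
    {s' : T.Omega} (htr : T.preTrans r'.last m s') {t : ℝ} (ht : 0 ≤ t) :
    ∃ s, T.preTrans r.last (t, m.2) s :=
  ⟨(T.tsucc r.last.1 (t, m.2.2), s'.2), ht, h.last_snd ▸ htr.2.1, htr.2.2.1, rfl⟩

theorem snd_patch_copyMove {D : Set ℝ → ℝ} (hD : ∀ S : Set ℝ, (∀ x ∈ S, 0 ≤ x) → 0 ≤ D S)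
    {σ₀ σ : T.PreRunF → T.RMove} {ρ : ℕ → T.PreRunF} {r : T.PreRunF} {n : ℕ} (hn : r.n = n)
    (hst : T.sameType r (ρ n)) (hav : ∃ s, T.preTrans (ρ n).last (σ (ρ n)) s) :
    (Arena.patch σ₀ (copyMove D σ ρ) r).2 = (σ (ρ n)).2 := by
  subst hn
  obtain ⟨s, htr⟩ := hav
  rw [Arena.patch_of_available (exists_preTrans_of_sameType hst htr (hD _ fun _ hx => hx.1))]
  rfl

theorem MinBoundary.patch_copyMove {μ : T.MinPre} (hμ : T.MinBoundary μ)
    (σ : T.PreRunF → T.RMove) (ρ : ℕ → T.PreRunF) :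
    T.MinBoundary (μ.patch (copyMove sInf σ ρ)) := fun r => by
  change (Arena.patch μ.1 _ r).1 = sInf (delaySet r.last.1.2 (Arena.patch μ.1 _ r).2.1.2.1)
  unfold Arena.patch
  split_ifs
  exacts [rfl, hμ r]

theorem MaxBoundary.patch_copyMove {χ : T.MaxPre} (hχ : T.MaxBoundary χ)
    (σ : T.PreRunF → T.RMove) (ρ : ℕ → T.PreRunF) :
    T.MaxBoundary (χ.patch (copyMove sSup σ ρ)) := fun r => by
  change (Arena.patch χ.1 _ r).1 = sSup (delaySet r.last.1.2 (Arena.patch χ.1 _ r).2.1.2.1)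
  unfold Arena.patch
  split_ifs
  exacts [rfl, hχ r]

end TimedGame

/-- If boundary strategies `μ` and `χ` are mutual best responses from `q` in
the boundary region graph `T̂`, then type-preserving boundary strategies
agreeing with them on all finite runs starting from `q` are mutual best
responses from every configuration in the region of `q`. -/
theorem typePreserving_mutual_best_responses (T : TimedGame)
    (μ : T.MinPre) (χ : T.MaxPre) (hμ : T.MinBoundary μ) (hχ : T.MaxBoundary χ)
    (q : T.Omega) (hq : T.barS q)
    (hbrχ : ∀ χ' : T.MaxPre, T.MaxBoundary χ' →
      Arena.AMin T.preArena q μ χ' ≤ Arena.AMin T.preArena q μ χ)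
    (hbrμ : ∀ μ' : T.MinPre, T.MinBoundary μ' →
      Arena.AMax T.preArena q μ χ ≤ Arena.AMax T.preArena q μ' χ)
    (μq : T.MinPre) (χq : T.MaxPre) (hμq : T.MinTP μq) (hχq : T.MaxTP χq)
    (hagreeμ : ∀ r : T.PreRunF, r.q 0 = q → μq.1 r = μ.1 r)
    (hagreeχ : ∀ r : T.PreRunF, r.q 0 = q → χq.1 r = χ.1 r)
    (q' : T.Omega) (hq' : T.barS q') (hsame : q'.2 = q.2) :
    (∀ χ' : T.MaxPre, T.MaxBoundary χ' →
      Arena.AMin T.preArena q' μq χ' ≤ Arena.AMin T.preArena q' μq χq) ∧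
    (∀ μ' : T.MinPre, T.MinBoundary μ' →
      Arena.AMax T.preArena q' μq χq ≤ Arena.AMax T.preArena q' μ' χq) := by
  have : Nonempty T.C :=
    let ⟨_, c, _⟩ := (hμq.2 _ _ (TimedGame.sameType_single (q := q) rfl)).2
    ⟨c⟩
  have hμcopy (χ₁ : T.MaxPre) (r : T.PreRunF) (n : ℕ)
      (hst : T.sameType (T.preArena.play μ χ₁ q n) r) :
      (μ.1 (T.preArena.play μ χ₁ q n)).2 = (μq.1 r).2 := by
    rw [← hagreeμ _ (Arena.play_q_zero μ χ₁ q n)]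
    exact (hμq.2 _ _ hst).1
  have hχcopy (μ₁ : T.MinPre) (r : T.PreRunF) (n : ℕ)
      (hst : T.sameType (T.preArena.play μ₁ χ q n) r) :
      (χ.1 (T.preArena.play μ₁ χ q n)).2 = (χq.1 r).2 := by
    rw [← hagreeχ _ (Arena.play_q_zero μ₁ χ q n)]
    exact (hχq.2 _ _ hst).1
  have hval := TimedGame.AMin_eq_and_AMax_eq_of_coupled <|
    TimedGame.coupled_play hμ hμq.1 hχ hχq.1 hq hq' hsame.symm
      (fun n hst _ => hμcopy χ _ n hst) fun n hst _ => hχcopy μ _ n hst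
  refine ⟨fun χ' hχ' => ?_, fun μ' hμ' => ?_⟩
  · have hψ := hχ.patch_copyMove χ'.1 (T.preArena.play μq χ' q')
    have h := TimedGame.AMin_eq_and_AMax_eq_of_coupled <|
      TimedGame.coupled_play hμ hμq.1 hψ hχ' hq hq' hsame.symm (fun n hst _ => hμcopy _ _ n hst)
        fun n hst hmax => TimedGame.snd_patch_copyMove (fun _ => Real.sSup_nonneg)
          (Arena.play_n _ _ q n) hst (χ'.2 _ (hst.isMin_iff.not.1 hmax))
    exact h.1.symm.trans_le ((hbrχ _ hψ).trans_eq hval.1)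
  · have hφ := hμ.patch_copyMove μ'.1 (T.preArena.play μ' χq q')
    have h := TimedGame.AMin_eq_and_AMax_eq_of_coupled <|
      TimedGame.coupled_play hφ hμ' hχ hχq.1 hq hq' hsame.symm
        (fun n hst hmin => TimedGame.snd_patch_copyMove (fun _ => Real.sInf_nonneg)
          (Arena.play_n _ _ q n) hst (μ'.2 _ (hst.isMin_iff.1 hmin)))
        fun n hst _ => hχcopy _ _ n hst
    exact hval.2.symm.trans_le ((hbrμ _ hφ).trans_eq h.2)
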